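/- arXiv:2304.09155 — 6 statements merged into one kernel-verified Lean document; each statement's English description precedes it below -/
import Mathlib

section
/- For every α ∈ (0, 1/2] there exists C > 0 such that the following holds. Let D be the random digraph D(n, C/n), with each edge coloured from [n] independently and uniformly at random. Then, with probability tending to 1 as n → ∞, every two disjoint sets of vertices X, Y, each of size ⌈αn⌉, satisfy that the number of distinct colours appearing on edges directed from X to Y is at least (1 − α)n. -/
/-!
If some disjoint pair `X`, `Y` of size `m = ⌈αn⌉` sees fewer than `(1 - α)n` colours, then the
set `T` of missing colours has more than `αn` elements and none of the `m²` ordered pairs from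
`X` to `Y` is an edge with colour in `T`. For a fixed triple `(X, Y, T)` the pairs behave
independently, each failing with probability `1 - p|T|/n`, so the triple is bad with probability
at most `exp (-p|T|m²/n) ≤ exp (-3n)` for `p = C/n`, `C = 3/α³`. A union bound over the at most
`8ⁿ` triples bounds the failure probability by `(8e⁻³)ⁿ → 0`.
-/

open Finset Filter

open scoped Classical in
noncomputable def pr {Ω : Type*} [Fintype Ω] (w : Ω → ℝ) (E : Ω → Prop) : ℝ :=
  ∑ ω : Ω, if E ω then w ω else 0

/-- Sample space for the uniformly coloured random digraph on `[n]` with `k` colours. -/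
abbrev DSample (n k : ℕ) := ((Fin n × Fin n) → Bool) × ((Fin n × Fin n) → Fin k)

/-- Product weight: random edges appear independently with probability `p`, colours
are uniform among the `k` colours. -/
noncomputable def dWeight (n k : ℕ) (p : ℝ) (ω : DSample n k) : ℝ :=
  (∏ e : Fin n × Fin n, if ω.1 e = true then p else 1 - p) * ((k : ℝ))⁻¹ ^ (n * n)

/-- Edges of the random digraph `D(n,p)`: ordered pairs of distinct vertices that were
sampled. -/
def rEdge {n k : ℕ} (ω : DSample n k) (x y : Fin n) : Prop :=
  x ≠ y ∧ ω.1 (x, y) = true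

section Probability

variable {Ω : Type*} [Fintype Ω] {w : Ω → ℝ}

lemma pr_le_sum (hw : ∀ ω, 0 ≤ w ω) (E : Ω → Prop) : pr w E ≤ ∑ ω, w ω :=
  Finset.sum_le_sum fun ω _ => by split_ifs <;> simp [hw ω]

lemma pr_add_pr_not (E : Ω → Prop) : pr w E + pr w (fun ω => ¬ E ω) = ∑ ω, w ω := by
  rw [pr, pr, ← Finset.sum_add_distrib]
  exact Finset.sum_congr rfl fun ω _ => by by_cases h : E ω <;> simp [h]

lemma pr_le_sum_pr_of_forall_exists {ι : Type*} (hw : ∀ ω, 0 ≤ w ω) {E : Ω → Prop}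
    (S : Finset ι) (B : ι → Ω → Prop) (h : ∀ ω, E ω → ∃ i ∈ S, B i ω) :
    pr w E ≤ ∑ i ∈ S, pr w (B i) := by
  classical
  have hterm : ∀ ω i, 0 ≤ if B i ω then w ω else 0 := fun ω i => by
    split_ifs <;> simp [hw ω]
  simp only [pr]
  rw [Finset.sum_comm]
  refine Finset.sum_le_sum fun ω _ => ?_
  split_ifs with hE
  · obtain ⟨i, hi, hB⟩ := h ω hE
    simpa [hB] using Finset.single_le_sum (fun j _ => hterm ω j) hi
  · exact Finset.sum_nonneg fun i _ => hterm ω i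

lemma tendsto_pr_nhds_one {Ω : ℕ → Type*} [∀ n, Fintype (Ω n)] {w : ∀ n, Ω n → ℝ}
    {E : ∀ n, Ω n → Prop} {u : ℕ → ℝ}
    (hw : ∀ᶠ n in atTop, (∀ ω, 0 ≤ w n ω) ∧ ∑ ω, w n ω = 1)
    (hE : ∀ᶠ n in atTop, pr (w n) (fun ω => ¬ E n ω) ≤ u n) (hu : Tendsto u atTop (nhds 0)) :
    Tendsto (fun n => pr (w n) (E n)) atTop (nhds 1) := by
  refine tendsto_of_tendsto_of_tendsto_of_le_of_le' (g := fun n => 1 - u n)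
    (by simpa using tendsto_const_nhds.sub hu) tendsto_const_nhds ?_ ?_
  · filter_upwards [hw, hE] with n ⟨_, hsum⟩ hn
    linarith [pr_add_pr_not (w := w n) (E n)]
  · filter_upwards [hw] with n ⟨hnonneg, hsum⟩
    exact hsum ▸ pr_le_sum hnonneg _

end Probability

section RandomDigraph

variable {n k : ℕ}

lemma dWeight_eq_prod (p : ℝ) (ω : DSample n k) :
    dWeight n k p ω = ∏ e, (if ω.1 e = true then p else 1 - p) * (k : ℝ)⁻¹ := by
  rw [dWeight, Finset.prod_mul_distrib, Finset.prod_const, Finset.card_univ,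
    Fintype.card_prod, Fintype.card_fin]

lemma dWeight_nonneg {p : ℝ} (hp0 : 0 ≤ p) (hp1 : p ≤ 1) (ω : DSample n k) :
    0 ≤ dWeight n k p ω :=
  mul_nonneg (Finset.prod_nonneg fun _ _ => by split_ifs <;> linarith) (by positivity)

lemma sum_prod_eq_prod_sum (G : Fin n × Fin n → Bool → Fin k → ℝ) :
    ∑ ω : DSample n k, ∏ e, G e (ω.1 e) (ω.2 e) = ∏ e, ∑ b, ∑ c, G e b c := by
  simp_rw [Fintype.prod_sum, Fintype.sum_prod_type]

lemma pr_forall_not_edge_colour_mem (hk : k ≠ 0) (p : ℝ) (P : Finset (Fin n × Fin n))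
    (T : Finset (Fin k)) :
    pr (dWeight n k p) (fun ω => ∀ e ∈ P, ¬(ω.1 e = true ∧ ω.2 e ∈ T)) =
      (1 - p * #T / k) ^ #P := by
  -- The weight restricted to the event is again a product over the edges.
  let G : Fin n × Fin n → Bool → Fin k → ℝ := fun e b c =>
    if e ∈ P → ¬(b = true ∧ c ∈ T) then (if b = true then p else 1 - p) * (k : ℝ)⁻¹ else 0
  have hedge : ∀ e, ∑ b, ∑ c, G e b c = if e ∈ P then 1 - p * #T / k else 1 := by
    intro e
    have hk' : (k : ℝ) ≠ 0 := Nat.cast_ne_zero.mpr hk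
    by_cases he : e ∈ P
    · have hT : #T ≤ k := by simpa using T.card_le_univ
      have hfree : ∑ c : Fin k, (if c ∈ T then (0 : ℝ) else p * (k : ℝ)⁻¹) =
          (k - #T) * (p * (k : ℝ)⁻¹) := by
        simp [Finset.sum_ite, Finset.filter_not, Finset.card_sdiff, Nat.cast_sub hT]
      simp [G, he, hfree]
      field_simp
      ring
    · simp [G, he]
      field_simp
      ring
  calc pr (dWeight n k p) (fun ω => ∀ e ∈ P, ¬(ω.1 e = true ∧ ω.2 e ∈ T))
      = ∑ ω : DSample n k, ∏ e, G e (ω.1 e) (ω.2 e) := by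
        simp only [pr, G, Fintype.prod_ite_zero, dWeight_eq_prod]
    _ = (1 - p * #T / k) ^ #P := by
        rw [sum_prod_eq_prod_sum, Finset.prod_congr rfl fun e _ => hedge e,
          Finset.prod_ite_mem, Finset.univ_inter, Finset.prod_const]

lemma sum_dWeight (hk : k ≠ 0) (p : ℝ) : ∑ ω : DSample n k, dWeight n k p ω = 1 := by
  simpa [pr] using pr_forall_not_edge_colour_mem (n := n) hk p ∅ ∅

lemma exists_avoided_colours_of_ncard_lt {ω : DSample n k} {X Y : Finset (Fin n)}
    (hXY : Disjoint X Y) {r : ℝ}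
    (h : ({c : Fin k | ∃ x ∈ X, ∃ y ∈ Y, rEdge ω x y ∧ ω.2 (x, y) = c}.ncard : ℝ) < r) :
    ∃ T : Finset (Fin k), k - r < #T ∧ ∀ e ∈ X ×ˢ Y, ¬(ω.1 e = true ∧ ω.2 e ∈ T) := by
  classical
  set U := {c : Fin k | ∃ x ∈ X, ∃ y ∈ Y, rEdge ω x y ∧ ω.2 (x, y) = c}
  refine ⟨U.toFinsetᶜ, ?_, ?_⟩
  · have hU : #U.toFinset ≤ k := by simpa using U.toFinset.card_le_univ
    rw [Finset.card_compl, Fintype.card_fin, Nat.cast_sub hU, ← Set.ncard_eq_toFinset_card' U]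
    linarith
  · rintro ⟨x, y⟩ hxy ⟨hedge, hcolour⟩
    obtain ⟨hx, hy⟩ := Finset.mem_product.mp hxy
    have hne : x ≠ y := fun h => Finset.disjoint_left.mp hXY hx (h ▸ hy)
    exact Finset.mem_compl.mp hcolour (Set.mem_toFinset.mpr ⟨x, hx, y, hy, ⟨hne, hedge⟩, rfl⟩)

lemma pr_forall_not_edge_colour_mem_le_exp (hk : k ≠ 0) {p : ℝ} (hp1 : p ≤ 1)
    (P : Finset (Fin n × Fin n)) (T : Finset (Fin k)) :
    pr (dWeight n k p) (fun ω => ∀ e ∈ P, ¬(ω.1 e = true ∧ ω.2 e ∈ T)) ≤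
      Real.exp (-(p * #T * #P / k)) := by
  have hk' : (0 : ℝ) < k := by positivity
  have hTk : (#T : ℝ) ≤ k := by exact_mod_cast (by simpa using T.card_le_univ)
  have hbase : 0 ≤ 1 - p * #T / k := by
    rw [sub_nonneg, div_le_one hk']
    nlinarith
  rw [pr_forall_not_edge_colour_mem hk]
  calc (1 - p * #T / k) ^ #P ≤ Real.exp (-(p * #T / k)) ^ #P :=
        pow_le_pow_left₀ hbase (Real.one_sub_le_exp_neg _) _
    _ = Real.exp (-(p * #T * #P / k)) := by
        rw [← Real.exp_nat_mul]
        ring_nf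

lemma pr_not_forall_many_colours_le (hk : k ≠ 0) {p : ℝ} (hp0 : 0 ≤ p) (hp1 : p ≤ 1)
    (m : ℕ) (r : ℝ) :
    pr (dWeight n k p) (fun ω => ¬ ∀ X Y : Finset (Fin n), Disjoint X Y → #X = m → #Y = m →
        r ≤ ({c : Fin k | ∃ x ∈ X, ∃ y ∈ Y, rEdge ω x y ∧ ω.2 (x, y) = c}.ncard : ℝ)) ≤
      2 ^ (2 * n + k) * Real.exp (-(p * (k - r) * m ^ 2 / k)) := by
  let S : Finset (Finset (Fin n) × Finset (Fin n) × Finset (Fin k)) :=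
    {i | #i.1 = m ∧ #i.2.1 = m ∧ k - r < #i.2.2}
  let avoids (i : Finset (Fin n) × Finset (Fin n) × Finset (Fin k)) (ω : DSample n k) : Prop :=
    ∀ e ∈ i.1 ×ˢ i.2.1, ¬(ω.1 e = true ∧ ω.2 e ∈ i.2.2)
  have hbound : ∀ i ∈ S, pr (dWeight n k p) (avoids i) ≤
      Real.exp (-(p * (k - r) * m ^ 2 / k)) := by
    rintro ⟨X, Y, T⟩ hi
    simp only [S, Finset.mem_filter, Finset.mem_univ, true_and] at hi
    obtain ⟨hX, hY, hT⟩ := hi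
    refine (pr_forall_not_edge_colour_mem_le_exp hk hp1 (X ×ˢ Y) T).trans ?_
    rw [Finset.card_product, hX, hY, Nat.cast_mul, ← sq]
    gcongr
  have hS : (#S : ℝ) ≤ 2 ^ (2 * n + k) := by
    have : #S ≤ 2 ^ (2 * n + k) :=
      S.card_le_univ.trans_eq (by simp [Fintype.card_finset, pow_add, two_mul, mul_assoc])
    exact_mod_cast this
  calc _ ≤ ∑ i ∈ S, pr (dWeight n k p) (avoids i) := by
        refine pr_le_sum_pr_of_forall_exists (dWeight_nonneg hp0 hp1) S avoids fun ω h => ?_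
        push Not at h
        obtain ⟨X, Y, hXY, hX, hY, hlt⟩ := h
        obtain ⟨T, hT, havoid⟩ := exists_avoided_colours_of_ncard_lt hXY hlt
        exact ⟨(X, Y, T), by simp [S, hX, hY, hT], havoid⟩
    _ ≤ ∑ _i ∈ S, Real.exp (-(p * (k - r) * m ^ 2 / k)) := Finset.sum_le_sum hbound
    _ ≤ 2 ^ (2 * n + k) * Real.exp (-(p * (k - r) * m ^ 2 / k)) := by
        rw [Finset.sum_const, nsmul_eq_mul]
        gcongr

end RandomDigraph

lemma eight_mul_exp_neg_three_lt_one : 8 * Real.exp (-3) < 1 := by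
  have h : (2 : ℝ) ^ 3 < Real.exp 1 ^ 3 :=
    pow_lt_pow_left₀ Real.exp_one_gt_two (by norm_num) (by norm_num)
  rw [← Real.exp_nat_mul] at h
  rw [Real.exp_neg, ← div_eq_mul_inv, div_lt_one (Real.exp_pos _)]
  norm_num at h ⊢
  exact h

theorem many_colours_between_large_sets_general
    (α : ℝ) (hα0 : 0 < α) :
    ∃ C : ℝ, 0 < C ∧
      Tendsto
        (fun n : ℕ =>
          pr (dWeight n n (C / n)) (fun ω =>
            ∀ X Y : Finset (Fin n), Disjoint X Y →
              X.card = ⌈α * n⌉₊ → Y.card = ⌈α * n⌉₊ →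
              (1 - α) * n ≤
                ({c : Fin n | ∃ x ∈ X, ∃ y ∈ Y, rEdge ω x y ∧ ω.2 (x, y) = c}.ncard : ℝ)))
        atTop (nhds 1) := by
  set C : ℝ := 3 / α ^ 3 with hC
  have hlarge : ∀ᶠ n : ℕ in atTop, 0 < n ∧ C / n ≤ 1 := by
    filter_upwards [eventually_gt_atTop 0, eventually_ge_atTop ⌈C⌉₊] with n hn hCn
    exact ⟨hn, div_le_one_of_le₀ (Nat.ceil_le.mp hCn) n.cast_nonneg⟩
  refine ⟨C, by positivity,
    tendsto_pr_nhds_one (u := fun n => (8 * Real.exp (-3)) ^ n) ?_ ?_ ?_⟩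
  · filter_upwards [hlarge] with n ⟨hn, hp1⟩
    exact ⟨dWeight_nonneg (by positivity) hp1, sum_dWeight hn.ne' _⟩
  · filter_upwards [hlarge] with n ⟨hn, hp1⟩
    refine (pr_not_forall_many_colours_le hn.ne' (by positivity) hp1 _ _).trans ?_
    have hn' : (0 : ℝ) < n := by exact_mod_cast hn
    set m := ⌈α * n⌉₊
    have hm : α * n ≤ m := Nat.le_ceil _
    have hexponent : 3 * n ≤ C / n * (n - (1 - α) * n) * m ^ 2 / n := by
      rw [hC]
      field_simp
      nlinarith [mul_le_mul hm hm (by positivity) (by positivity)]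
    rw [mul_pow, ← Real.exp_nat_mul, show 2 * n + n = 3 * n by ring, pow_mul]
    norm_num
    linarith
  · exact tendsto_pow_atTop_nhds_zero_of_lt_one (by positivity) eight_mul_exp_neg_three_lt_one

theorem many_colours_between_large_sets
    (α : ℝ) (hα0 : 0 < α) (hα1 : α ≤ 1 / 2) :
    ∃ C : ℝ, 0 < C ∧
      Tendsto
        (fun n : ℕ =>
          pr (dWeight n n (C / n)) (fun ω =>
            ∀ X Y : Finset (Fin n), Disjoint X Y →
              X.card = ⌈α * n⌉₊ → Y.card = ⌈α * n⌉₊ →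
              (1 - α) * n ≤
                ({c : Fin n | ∃ x ∈ X, ∃ y ∈ Y, rEdge ω x y ∧ ω.2 (x, y) = c}.ncard : ℝ)))
        atTop (nhds 1) :=
  many_colours_between_large_sets_general α hα0
end

section
/- For every real α, c > 0 and integer r ≥ 2 there exists ρ > 0 such that for all sufficiently large n the following holds. Let ℋ be an r-uniform hypergraph on n vertices with at least αn^r edges. Let m = ⌊cn⌋ and let ℋ_m be the random subhypergraph of ℋ consisting of m edges of ℋ chosen uniformly at random with replacement. Then, with probability at least 1 − exp(−cα²n/3), the hypergraph ℋ_m contains a matching of size at least ρn. -/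
/-!
A maximal matching `M` among the sampled edges meets every sampled edge, so the at most `r|M|`
vertices it covers form a transversal of the sample. Hence if the sample has no matching of size
`ρn`, all `⌊cn⌋` sampled edges meet one fixed set `W` of fewer than `rρn` vertices. Such a `W`
meets at most `|W| n^(r-1) < rρ n^r` edges of `ℋ`, a fraction at most `rρ/α = e^(-t)` of them, so
this happens for a given `W` with probability at most `e^(-t⌊cn⌋)`. A union bound over the `2^n`
sets `W` and the choice `t = (log 2 + cα²/3 + 1)/c` give the bound as soon as `n ≥ t`.
-/

open Finset

-- Probability of an event under the uniform distribution on a finite sample space.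
open scoped Classical in
noncomputable def uprob {Ω : Type*} [Fintype Ω] (E : Ω → Prop) : ℝ :=
  ((Finset.univ.filter E).card : ℝ) / (Fintype.card Ω : ℝ)

section UniformProbability

variable {Ω : Type*} [Fintype Ω]

lemma uprob_eq_card_filter_div (E : Ω → Prop) [DecidablePred E] :
    uprob E = #(univ.filter E) / Fintype.card Ω := by
  unfold uprob
  congr!

lemma uprob_nonneg (E : Ω → Prop) : 0 ≤ uprob E := by
  unfold uprob
  positivity

lemma uprob_mono {E F : Ω → Prop} (h : ∀ ω, E ω → F ω) : uprob E ≤ uprob F := by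
  classical
  rw [uprob_eq_card_filter_div, uprob_eq_card_filter_div]
  gcongr
  exact h _

lemma uprob_not [Nonempty Ω] (E : Ω → Prop) : uprob (fun ω => ¬ E ω) = 1 - uprob E := by
  classical
  rw [uprob_eq_card_filter_div, uprob_eq_card_filter_div, eq_sub_iff_add_eq, ← add_div,
    div_eq_one_iff_eq (by positivity)]
  have := card_filter_add_card_filter_not (s := univ) E
  rw [card_univ] at this
  exact_mod_cast (add_comm _ _).trans this

lemma uprob_exists_mem_le_sum {ι : Type*} (s : Finset ι) (E : ι → Ω → Prop) :
    uprob (fun ω => ∃ i ∈ s, E i ω) ≤ ∑ i ∈ s, uprob (E i) := by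
  classical
  simp only [uprob_eq_card_filter_div, ← sum_div]
  gcongr
  have : univ.filter (fun ω => ∃ i ∈ s, E i ω) = s.biUnion fun i => univ.filter (E i) := by
    ext ω; simp
  rw [this]
  exact_mod_cast card_biUnion_le

lemma uprob_forall_pi {ι β : Type*} [Fintype ι] [DecidableEq ι] [Fintype β] (p : β → Prop) :
    uprob (fun f : ι → β => ∀ i, p (f i)) = uprob p ^ Fintype.card ι := by
  classical
  have : univ.filter (fun f : ι → β => ∀ i, p (f i)) =
      Fintype.piFinset fun _ => univ.filter p := by
    ext f; simp [Fintype.mem_piFinset]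
  rw [uprob_eq_card_filter_div, uprob_eq_card_filter_div, this, Fintype.card_piFinset,
    prod_const, Fintype.card_fun, div_pow]
  push_cast
  rfl

lemma uprob_subtype_mem {α : Type*} (s : Finset α) (p : α → Prop) [DecidablePred p] :
    uprob (fun x : {a // a ∈ s} => p x) = #(s.filter p) / #s := by
  rw [uprob_eq_card_filter_div, Fintype.card_coe, univ_eq_attach, filter_attach, card_map,
    card_attach]

end UniformProbability

section Hypergraph

variable {α : Type*} [DecidableEq α]

def HasMatchingOfCardGe {ι : Type*} (g : ι → Finset α) (k : ℝ) : Prop :=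
  ∃ T : Finset (Finset α), (T : Set (Finset α)) ⊆ Set.range g ∧
    (T : Set (Finset α)).Pairwise Disjoint ∧ k ≤ #T

lemma exists_maximal_matching (S : Finset (Finset α)) (hS : ∀ e ∈ S, e.Nonempty) :
    ∃ M ⊆ S, (M : Set (Finset α)).Pairwise Disjoint ∧ ∀ e ∈ S, ¬ Disjoint e (M.sup id) := by
  classical
  set matchings :=
    S.powerset.filter fun M : Finset (Finset α) => (M : Set (Finset α)).Pairwise Disjoint
  obtain ⟨M, hM, hmax⟩ := matchings.exists_maximal ⟨∅, by simp [matchings]⟩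
  rw [mem_filter, mem_powerset] at hM
  refine ⟨M, hM.1, hM.2, fun e he hdisj => ?_⟩
  have heM : e ∉ M := fun h => (hS e he).ne_empty <|
    disjoint_self.1 (hdisj.mono_right (le_sup (f := id) h))
  have hins : insert e M ∈ matchings := by
    rw [mem_filter, mem_powerset, coe_insert]
    refine ⟨insert_subset he hM.1, hM.2.insert fun f hf _ => ?_⟩
    have hef : Disjoint e f := hdisj.mono_right (le_sup (f := id) hf)
    exact ⟨hef, hef.symm⟩
  exact heM (hmax hins (subset_insert e M) (mem_insert_self e M))

lemma exists_matching_or_transversal {ι : Type*} [Fintype ι] {r : ℕ} (hr : 0 < r)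
    (g : ι → Finset α) (hg : ∀ i, #(g i) = r) (k : ℝ) :
    HasMatchingOfCardGe g k ∨ ∃ W : Finset α, #W < r * k ∧ ∀ i, ¬ Disjoint (g i) W := by
  have hS : ∀ e ∈ univ.image g, #e = r := by
    simp only [mem_image, mem_univ, true_and, forall_exists_index, forall_apply_eq_imp_iff, hg,
      implies_true]
  obtain ⟨M, hMS, hMdisj, hMmax⟩ := exists_maximal_matching (univ.image g)
    fun e he => card_pos.1 (hS e he ▸ hr)
  by_cases hk : k ≤ #M
  · left
    exact ⟨M, by simpa [← coe_subset] using hMS, hMdisj, hk⟩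
  · right
    refine ⟨M.sup id, ?_, fun i => hMmax _ (mem_image_of_mem g (mem_univ i))⟩
    have hW : #(M.sup id) ≤ #M * r := by
      rw [sup_eq_biUnion]
      exact card_biUnion_le_card_mul _ _ _ fun e he => (hS e (hMS he)).le
    calc (#(M.sup id) : ℝ) ≤ #M * r := by exact_mod_cast hW
      _ < r * k := by rw [mul_comm]; gcongr; exact not_le.1 hk

variable [Fintype α]

lemma card_filter_mem_le {r : ℕ} (H : Finset (Finset α)) (hH : ∀ e ∈ H, #e = r) (v : α) :
    #(H.filter (v ∈ ·)) ≤ Fintype.card α ^ (r - 1) :=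
  calc #(H.filter (v ∈ ·)) ≤ #((powersetCard (r - 1) univ).image (insert v)) := by
        refine card_le_card fun e he => ?_
        rw [mem_filter] at he
        refine mem_image.2 ⟨e.erase v, mem_powersetCard.2 ⟨subset_univ _, ?_⟩, insert_erase he.2⟩
        rw [card_erase_of_mem he.2, hH e he.1]
    _ ≤ #(powersetCard (r - 1) (univ : Finset α)) := card_image_le
    _ ≤ Fintype.card α ^ (r - 1) := by
        rw [card_powersetCard, card_univ]
        exact Nat.choose_le_pow _ _

lemma card_filter_not_disjoint_le {r : ℕ} (H : Finset (Finset α)) (hH : ∀ e ∈ H, #e = r)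
    (W : Finset α) :
    #(H.filter fun e => ¬ Disjoint e W) ≤ #W * Fintype.card α ^ (r - 1) :=
  calc #(H.filter fun e => ¬ Disjoint e W) ≤ #(W.biUnion fun v => H.filter (v ∈ ·)) := by
        refine card_le_card fun e he => ?_
        rw [mem_filter, not_disjoint_iff] at he
        obtain ⟨v, hve, hvW⟩ := he.2
        exact mem_biUnion.2 ⟨v, hvW, mem_filter.2 ⟨he.1, hve⟩⟩
    _ ≤ #W * Fintype.card α ^ (r - 1) :=
        card_biUnion_le_card_mul _ _ _ fun v _ => card_filter_mem_le H hH v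

lemma uprob_not_disjoint_le {r : ℕ} (hr : 1 ≤ r) (H : Finset (Finset α)) (hH : ∀ e ∈ H, #e = r)
    {δ ε : ℝ} (hε : 0 ≤ ε) (hdense : δ * Fintype.card α ^ r ≤ #H) {W : Finset α}
    (hW : #W ≤ ε * δ * Fintype.card α) :
    uprob (fun e : {e // e ∈ H} => ¬ Disjoint (e : Finset α) W) ≤ ε := by
  rw [uprob_subtype_mem H fun e => ¬ Disjoint e W]
  refine div_le_of_le_mul₀ (Nat.cast_nonneg _) hε ?_
  calc (#(H.filter fun e => ¬ Disjoint e W) : ℝ) ≤ #W * (Fintype.card α : ℝ) ^ (r - 1) := by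
        exact_mod_cast card_filter_not_disjoint_le H hH W
    _ ≤ ε * δ * Fintype.card α * (Fintype.card α : ℝ) ^ (r - 1) := by gcongr
    _ = ε * (δ * Fintype.card α ^ r) := by
        rw [mul_assoc (ε * δ), ← pow_succ', Nat.sub_add_cancel hr, mul_assoc]
    _ ≤ ε * #H := by gcongr

lemma uprob_not_hasMatchingOfCardGe_le {r : ℕ} (m : ℕ) (hr : 1 ≤ r) (H : Finset (Finset α))
    (hH : ∀ e ∈ H, #e = r) {δ ε k : ℝ} (hε : 0 ≤ ε) (hdense : δ * Fintype.card α ^ r ≤ #H)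
    (hk : r * k ≤ ε * δ * Fintype.card α) :
    uprob (fun f : Fin m → {e // e ∈ H} => ¬ HasMatchingOfCardGe (fun i => (f i : Finset α)) k)
      ≤ 2 ^ Fintype.card α * ε ^ m := by
  set small := univ.filter fun W : Finset α => (#W : ℝ) < r * k
  calc _ ≤ uprob fun f : Fin m → {e // e ∈ H} => ∃ W ∈ small, ∀ i, ¬ Disjoint (f i : Finset α) W :=
        uprob_mono fun f hf => ((exists_matching_or_transversal (by omega)
          (fun i => (f i : Finset α)) (fun i => hH _ (f i).2) k).resolve_left hf).imp
          fun W hW => ⟨mem_filter.2 ⟨mem_univ W, hW.1⟩, hW.2⟩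
    _ ≤ ∑ W ∈ small, (uprob fun e : {e // e ∈ H} => ¬ Disjoint (e : Finset α) W) ^ m := by
        refine (uprob_exists_mem_le_sum _ _).trans_eq (sum_congr rfl fun W _ => ?_)
        rw [uprob_forall_pi fun e : {e // e ∈ H} => ¬ Disjoint (e : Finset α) W, Fintype.card_fin]
    _ ≤ ∑ W ∈ small, ε ^ m := by
        refine sum_le_sum fun W hW => pow_le_pow_left₀ (uprob_nonneg _) ?_ _
        exact uprob_not_disjoint_le hr H hH hε hdense ((mem_filter.1 hW).2.le.trans hk)
    _ ≤ 2 ^ Fintype.card α * ε ^ m := by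
        rw [sum_const, nsmul_eq_mul]
        gcongr
        exact_mod_cast (card_le_univ small).trans_eq Fintype.card_finset

end Hypergraph

lemma two_pow_mul_exp_neg_pow_floor_le {a c t : ℝ} {n : ℕ} (ht : 0 ≤ t)
    (htc : t * c = Real.log 2 + a + 1) (htn : t ≤ n) :
    2 ^ n * Real.exp (-t) ^ ⌊c * n⌋₊ ≤ Real.exp (-(a * n)) := by
  rw [← Real.exp_log (two_pos : (0 : ℝ) < 2), ← Real.exp_nat_mul, ← Real.exp_nat_mul,
    ← Real.exp_add, Real.exp_le_exp]
  have hfloor : c * n - 1 ≤ ⌊c * n⌋₊ := by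
    linarith [Nat.lt_floor_add_one (c * n)]
  nlinarith [mul_le_mul_of_nonneg_left hfloor ht]

theorem random_sparse_subhypergraph_has_linear_matching_with_replacement
    (α c : ℝ) (hα : 0 < α) (hc : 0 < c) (r : ℕ) (hr : 2 ≤ r) :
    ∃ ρ : ℝ, 0 < ρ ∧ ∃ N : ℕ, ∀ n : ℕ, N ≤ n →
      ∀ 𝓗 : Finset (Finset (Fin n)),
        (∀ e ∈ 𝓗, e.card = r) →
        α * (n : ℝ) ^ r ≤ (𝓗.card : ℝ) →
        1 - Real.exp (-(c * α ^ 2 * n) / 3) ≤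
          uprob (fun f : Fin ⌊c * (n : ℝ)⌋₊ → {e // e ∈ 𝓗} =>
            -- the chosen edges contain a matching of size at least ρn:
            ∃ T : Finset (Finset (Fin n)),
              (↑T : Set (Finset (Fin n))) ⊆ Set.range (fun i => (f i : Finset (Fin n))) ∧
              (↑T : Set (Finset (Fin n))).Pairwise (fun e e' => Disjoint e e') ∧
              ρ * n ≤ (T.card : ℝ)) := by
  set t := (Real.log 2 + c * α ^ 2 / 3 + 1) / c
  have ht : 0 < t := div_pos (by positivity [Real.log_pos one_lt_two]) hc
  have hr0 : (0 : ℝ) < r := by exact_mod_cast (two_pos.trans_le hr)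
  refine ⟨Real.exp (-t) * α / r, by positivity, ⌈t⌉₊, fun n hn H hH hdense => ?_⟩
  have htn : t ≤ n := (Nat.le_ceil t).trans (by exact_mod_cast hn)
  have hn0 : (0 : ℝ) < n := ht.trans_le htn
  have hH0 : (0 : ℝ) < #H := (by positivity : (0 : ℝ) < α * n ^ r).trans_le hdense
  have : Nonempty {e // e ∈ H} := (card_pos.1 (by exact_mod_cast hH0)).to_subtype
  rw [sub_le_comm, ← uprob_not]
  calc _ ≤ 2 ^ Fintype.card (Fin n) * Real.exp (-t) ^ ⌊c * (n : ℝ)⌋₊ :=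
        uprob_not_hasMatchingOfCardGe_le _ (by omega) H hH (δ := α) (Real.exp_pos _).le
          (by rwa [Fintype.card_fin]) (le_of_eq (by rw [Fintype.card_fin]; field_simp))
    _ = 2 ^ n * Real.exp (-t) ^ ⌊c * (n : ℝ)⌋₊ := by rw [Fintype.card_fin]
    _ ≤ Real.exp (-(c * α ^ 2 * n) / 3) := by
        rw [neg_div, mul_div_right_comm]
        exact two_pow_mul_exp_neg_pow_floor_le ht.le (div_mul_cancel₀ _ hc.ne') htn
end

section
/- For every real α, c > 0 and integer r ≥ 2 there exists ρ > 0 such that for all sufficiently large n the following holds. Let ℋ be an r-uniform hypergraph on n vertices with at least αn^r edges. Let p = c·n^{−r+1} and let ℋ_p be the random subhypergraph of ℋ obtained by keeping each edge of ℋ independently with probability p. Then, with probability at least 1 − exp(−cα²n/(3r)), the hypergraph ℋ_p contains a matching of size at least ρn. -/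
/-!
Take a maximal matching `M` of the kept edges. If `|M| < ρn` with `ρ = t/r`, the vertices of `M`
form a set of at most `k = ⌊tn⌋` vertices meeting every kept edge, so some `k`-set `S` has the
property that no edge of `ℋ` avoiding `S` is kept. At most `k n^(r-1)` edges meet `S`, so at
least `αn^r - kn^(r-1)` avoid it, and all of them are discarded with probability at most
`exp(-p(αn^r - kn^(r-1))) ≤ exp(-cαn/2)` once `t ≤ α/2`. A union bound over the
`C(n,k) ≤ exp(k(1 + log(n/k))) ≤ exp(tn(1 + log(2/t)))` choices of `S` loses at most `exp(cαn/4)`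
for `t` small, because `t(1 + log(2/t)) → 0` as `t → 0⁺`.
-/

open Finset

open Real

section Pr

variable {Ω : Type*} [Fintype Ω] {w : Ω → ℝ}

lemma pr_not (hw : ∑ ω, w ω = 1) (E : Ω → Prop) : pr w (fun ω => ¬E ω) = 1 - pr w E := by
  rw [← hw, pr, pr, eq_sub_iff_add_eq, ← sum_add_distrib]
  exact sum_congr rfl fun ω _ => by split_ifs <;> simp_all

lemma pr_mono (hw : ∀ ω, 0 ≤ w ω) {E F : Ω → Prop} (h : ∀ ω, E ω → F ω) : pr w E ≤ pr w F := by
  refine sum_le_sum fun ω _ => ?_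
  by_cases hF : F ω <;> by_cases hE : E ω <;> simp_all

lemma pr_exists_le_sum (hw : ∀ ω, 0 ≤ w ω) {κ : Type*} (I : Finset κ) (F : κ → Ω → Prop) :
    pr w (fun ω => ∃ i ∈ I, F i ω) ≤ ∑ i ∈ I, pr w (F i) := by
  classical
  simp only [pr]
  rw [sum_comm]
  refine sum_le_sum fun ω _ => ?_
  have hterm : ∀ i ∈ I, 0 ≤ if F i ω then w ω else 0 := fun i _ => by split_ifs <;> simp [hw ω]
  split_ifs with h
  · obtain ⟨i, hi, hF⟩ := h
    simpa [hF] using single_le_sum hterm hi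
  · exact sum_nonneg hterm

end Pr

section Bernoulli

variable {ι : Type*} [Fintype ι]

noncomputable def bernoulliWeight (p : ℝ) (ω : ι → Bool) : ℝ :=
  ∏ i, if ω i = true then p else 1 - p

lemma bernoulliWeight_nonneg {p : ℝ} (hp0 : 0 ≤ p) (hp1 : p ≤ 1) (ω : ι → Bool) :
    0 ≤ bernoulliWeight p ω :=
  prod_nonneg fun i _ => by split_ifs <;> linarith

variable [DecidableEq ι]

lemma sum_bernoulliWeight (p : ℝ) : ∑ ω, bernoulliWeight (ι := ι) p ω = 1 := by
  simp only [bernoulliWeight]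
  rw [← Fintype.prod_sum fun i (b : Bool) => if b = true then p else 1 - p]
  simp

lemma pr_bernoulliWeight_forall_false (p : ℝ) (B : Finset ι) :
    pr (bernoulliWeight p) (fun ω => ∀ i ∈ B, ω i = false) = (1 - p) ^ #B := by
  calc pr (bernoulliWeight p) (fun ω => ∀ i ∈ B, ω i = false)
      = ∑ ω : ι → Bool, ∏ i, if i ∈ B → ω i = false then (if ω i = true then p else 1 - p)
          else 0 := by
        simp only [pr, bernoulliWeight, Fintype.prod_ite_zero]
        exact sum_congr rfl fun ω _ => by congr
    _ = ∏ i, if i ∈ B then 1 - p else 1 := by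
        rw [← Fintype.prod_sum fun i (b : Bool) =>
          if i ∈ B → b = false then (if b = true then p else 1 - p) else 0]
        refine prod_congr rfl fun i _ => ?_
        by_cases hi : i ∈ B <;> simp [hi]
    _ = (1 - p) ^ #B := by rw [prod_ite_mem, univ_inter, prod_const]

lemma pr_bernoulliWeight_forall_false_le {p : ℝ} (hp1 : p ≤ 1) (B : Finset ι) :
    pr (bernoulliWeight p) (fun ω => ∀ i ∈ B, ω i = false) ≤ exp (-(p * #B)) :=
  calc pr (bernoulliWeight p) (fun ω => ∀ i ∈ B, ω i = false) = (1 - p) ^ #B :=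
        pr_bernoulliWeight_forall_false p B
    _ ≤ exp (-p) ^ #B :=
        pow_le_pow_left₀ (by linarith) (by linarith [add_one_le_exp (-p)]) _
    _ = exp (-(p * #B)) := by rw [← exp_nat_mul]; ring_nf

end Bernoulli

lemma card_le_pow_of_forall_card_eq {V : Type*} [Fintype V] {r : ℕ} {𝓗 : Finset (Finset V)}
    (h : ∀ e ∈ 𝓗, #e = r) : #𝓗 ≤ Fintype.card V ^ r :=
  (card_le_card fun e he => mem_powersetCard.2 ⟨subset_univ e, h e he⟩).trans
    ((card_powersetCard r univ).trans_le (Nat.choose_le_pow _ _))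

section Matching

variable {ι V : Type*} [DecidableEq V] (f : ι → Finset V)

lemma exists_pairwiseDisjoint_forall_not_disjoint_biUnion (K : Finset ι)
    (hK : ∀ i ∈ K, (f i).Nonempty) :
    ∃ M ⊆ K, (M : Set ι).PairwiseDisjoint f ∧ ∀ i ∈ K, ¬Disjoint (f i) (M.biUnion f) := by
  classical
  set matchings : Finset (Finset ι) := {M ∈ K.powerset | (↑M : Set ι).PairwiseDisjoint f}
  obtain ⟨M, hM, hmax⟩ := exists_max_image matchings card ⟨∅, by simp [matchings]⟩
  obtain ⟨hMK, hMdisj⟩ := mem_filter.1 hM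
  refine ⟨M, mem_powerset.1 hMK, hMdisj, fun i hi hdisj => ?_⟩
  have hiM : i ∉ M := fun hiM =>
    (hK i hi).ne_empty (disjoint_self.1 (hdisj.mono_right (subset_biUnion_of_mem f hiM)))
  have hins : insert i M ∈ matchings := by
    refine mem_filter.2 ⟨mem_powerset.2 (insert_subset hi (mem_powerset.1 hMK)), ?_⟩
    rw [coe_insert]
    exact hMdisj.insert fun j hj _ => (disjoint_biUnion_right _ _ _).1 hdisj j hj
  have hle := hmax _ hins
  rw [card_insert_of_notMem hiM] at hle
  omega

variable [Fintype V] {r : ℕ}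

lemma exists_card_eq_forall_not_disjoint (hr : 0 < r) (hfr : ∀ i, #(f i) = r) (K : Finset ι)
    {k : ℕ} (hk : k ≤ Fintype.card V)
    (hK : ∀ M ⊆ K, (M : Set ι).PairwiseDisjoint f → r * #M ≤ k) :
    ∃ S : Finset V, #S = k ∧ ∀ i ∈ K, ¬Disjoint (f i) S := by
  obtain ⟨M, hMK, hMdisj, hhit⟩ := exists_pairwiseDisjoint_forall_not_disjoint_biUnion f K
    fun i _ => card_pos.1 (hfr i ▸ hr)
  have hcard : #(M.biUnion f) ≤ k := calc
    #(M.biUnion f) ≤ #M * r := card_biUnion_le_card_mul M f r fun i _ => (hfr i).le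
    _ ≤ k := by rw [mul_comm]; exact hK M hMK hMdisj
  obtain ⟨S, hMS, -, hS⟩ := exists_subsuperset_card_eq (subset_univ _) hcard (by simpa using hk)
  exact ⟨S, hS, fun i hi h => hhit i hi (h.mono_right hMS)⟩

variable [Fintype ι]

lemma card_filter_mem_le_s6 (hf : Function.Injective f) (hfr : ∀ i, #(f i) = r) (v : V) :
    #{i | v ∈ f i} ≤ (Fintype.card V).choose (r - 1) := by
  rw [← card_univ, ← card_powersetCard]
  refine card_le_card_of_injOn (fun i => (f i).erase v) (fun i hi => ?_) fun i hi j hj hij => ?_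
  · rw [mem_coe, mem_filter] at hi
    simp [card_erase_of_mem hi.2, hfr]
  · rw [mem_coe, mem_filter] at hi hj
    exact hf (by rw [← insert_erase hi.2, ← insert_erase hj.2]; exact congrArg (insert v) hij)

lemma card_filter_not_disjoint_le_s6 (hf : Function.Injective f) (hfr : ∀ i, #(f i) = r)
    (S : Finset V) : #{i | ¬Disjoint (f i) S} ≤ #S * (Fintype.card V).choose (r - 1) := by
  classical
  calc
    #{i | ¬Disjoint (f i) S} ≤ #(S.biUnion fun v => {i | v ∈ f i}) := by
      refine card_le_card fun i hi => ?_
      obtain ⟨v, hvi, hvS⟩ := not_disjoint_iff.1 (mem_filter.1 hi).2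
      exact mem_biUnion.2 ⟨v, hvS, mem_filter.2 ⟨mem_univ _, hvi⟩⟩
    _ ≤ #S * (Fintype.card V).choose (r - 1) :=
      card_biUnion_le_card_mul _ _ _ fun v _ => card_filter_mem_le_s6 f hf hfr v

end Matching

lemma choose_le_exp_mul_one_add_log (n : ℕ) {k : ℕ} (hk : k ≠ 0) :
    (n.choose k : ℝ) ≤ exp (k * (1 + log (n / k))) := by
  rcases Nat.eq_zero_or_pos n with rfl | hn
  · simp [Nat.choose_eq_zero_of_lt (Nat.pos_of_ne_zero hk), exp_nonneg]
  have hk' : (0 : ℝ) < k := by positivity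
  calc (n.choose k : ℝ) ≤ n ^ k / k.factorial := Nat.choose_le_pow_div k n
    _ = (n / k) ^ k * (k ^ k / k.factorial) := by
        rw [div_pow, mul_div_assoc', div_mul_cancel₀ _ (pow_ne_zero _ hk'.ne')]
    _ ≤ (n / k) ^ k * exp k := by gcongr; exact pow_div_factorial_le_exp (x := k) hk'.le k
    _ = exp (k * (1 + log (n / k))) := by
        rw [mul_add, mul_one, exp_add, exp_nat_mul, exp_log (by positivity), mul_comm]

lemma choose_floor_le_exp (n : ℕ) {t : ℝ} (ht0 : 0 < t) (ht1 : t ≤ 1) (htn : 2 ≤ t * n) :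
    (n.choose ⌊t * n⌋₊ : ℝ) ≤ exp (n * (t * (1 + log (2 / t)))) := by
  set k := ⌊t * n⌋₊
  have hkt : (k : ℝ) ≤ t * n := Nat.floor_le (by positivity)
  have hk2 : t * n / 2 ≤ k := by linarith [Nat.sub_one_lt_floor (t * n)]
  have hk0 : (0 : ℝ) < k := by linarith
  have hlog : 0 ≤ 1 + log (2 / t) := by
    linarith [log_nonneg (show (1 : ℝ) ≤ 2 / t by rw [le_div_iff₀ ht0]; linarith)]
  have hn0 : (0 : ℝ) < n := by nlinarith
  have hnk : (n : ℝ) / k ≤ 2 / t := by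
    rw [div_le_div_iff₀ hk0 ht0]; linarith
  refine (choose_le_exp_mul_one_add_log n (by exact_mod_cast hk0.ne')).trans (exp_le_exp.2 ?_)
  calc (k : ℝ) * (1 + log (n / k)) ≤ k * (1 + log (2 / t)) := by gcongr
    _ ≤ t * n * (1 + log (2 / t)) := by gcongr
    _ = n * (t * (1 + log (2 / t))) := by ring

lemma choose_floor_mul_exp_le {n r : ℕ} (hr : 0 < r) {α c t m : ℝ} (hc : 0 ≤ c)
    (ht0 : 0 < t) (ht1 : t ≤ 1) (htα : t ≤ α / 2) (htn : 2 ≤ t * n)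
    (htlog : t * (1 + log (2 / t)) ≤ c * α / 4) (hm : α * n ^ r ≤ m) :
    n.choose ⌊t * n⌋₊ * exp (-(c / (n : ℝ) ^ (r - 1) * (m - ⌊t * n⌋₊ * (n : ℝ) ^ (r - 1))))
      ≤ exp (-(c * α * n / 4)) := by
  have hn0 : (0 : ℝ) < n := by nlinarith
  have hk : (⌊t * n⌋₊ : ℝ) ≤ α / 2 * n :=
    (Nat.floor_le (by positivity)).trans (by gcongr)
  have hpow : (n : ℝ) ^ r = (n : ℝ) ^ (r - 1) * n := by
    rw [← pow_succ, Nat.sub_add_cancel hr]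
  have hexponent : c * α * n / 2 ≤
      c / (n : ℝ) ^ (r - 1) * (m - ⌊t * n⌋₊ * (n : ℝ) ^ (r - 1)) := calc
    c * α * n / 2 ≤ c * (α * n - ⌊t * n⌋₊) := by nlinarith
    _ = c / (n : ℝ) ^ (r - 1) * (α * n ^ r - ⌊t * n⌋₊ * (n : ℝ) ^ (r - 1)) := by
        rw [hpow]; field_simp
    _ ≤ c / (n : ℝ) ^ (r - 1) * (m - ⌊t * n⌋₊ * (n : ℝ) ^ (r - 1)) := by gcongr
  calc n.choose ⌊t * n⌋₊ * exp (-(c / (n : ℝ) ^ (r - 1) * (m - ⌊t * n⌋₊ * (n : ℝ) ^ (r - 1))))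
      ≤ exp (n * (c * α / 4)) * exp (-(c * α * n / 2)) := by
        gcongr
        exact (choose_floor_le_exp n ht0 ht1 htn).trans (exp_le_exp.2 (by gcongr))
    _ = exp (-(c * α * n / 4)) := by rw [← exp_add]; ring_nf

open Filter Topology in
lemma exists_mul_one_add_log_two_div_le {ε δ : ℝ} (hε : 0 < ε) (hδ : 0 < δ) :
    ∃ t, 0 < t ∧ t ≤ δ ∧ t * (1 + log (2 / t)) ≤ ε := by
  have hcont : Continuous fun t : ℝ => t * (1 + log 2) - t * log t :=
    (continuous_mul_const _).sub continuous_mul_log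
  have hsmall : ∀ᶠ t in 𝓝 (0 : ℝ), t * (1 + log 2) - t * log t < ε ∧ t < δ :=
    (hcont.continuousAt.eventually (gt_mem_nhds (by simpa using hε))).and (gt_mem_nhds hδ)
  obtain ⟨t, ⟨hlog, htδ⟩, ht0 : 0 < t⟩ :=
    ((hsmall.filter_mono nhdsWithin_le_nhds).and (self_mem_nhdsWithin (s := Set.Ioi 0))).exists
  refine ⟨t, ht0, htδ.le, le_of_lt ?_⟩
  rwa [log_div two_ne_zero (ne_of_gt ht0), mul_add, mul_sub, ← add_sub_assoc, ← mul_add]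

section RandomSubhypergraph

variable {ι V : Type*} [Fintype ι] [DecidableEq ι] [Fintype V] [DecidableEq V] (f : ι → Finset V)

lemma pr_exists_forall_kept_not_disjoint_le {p : ℝ} (hp0 : 0 ≤ p) (hp1 : p ≤ 1) (k : ℕ) {m : ℝ}
    (hm : ∀ S : Finset V, #S = k → m ≤ #{i | Disjoint (f i) S}) :
    pr (bernoulliWeight p) (fun ω => ∃ S : Finset V, #S = k ∧ ∀ i, ω i = true → ¬Disjoint (f i) S)
      ≤ (Fintype.card V).choose k * exp (-(p * m)) := by
  have hw := bernoulliWeight_nonneg (ι := ι) hp0 hp1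
  calc _ ≤ pr (bernoulliWeight p) (fun ω => ∃ S ∈ powersetCard k univ,
          ∀ i ∈ ({i | Disjoint (f i) S} : Finset ι), ω i = false) := by
        refine pr_mono hw fun ω ⟨S, hS, hkept⟩ => ⟨S, mem_powersetCard.2 ⟨subset_univ S, hS⟩, ?_⟩
        intro i hi
        simpa using mt (hkept i) (not_not.2 (mem_filter.1 hi).2)
    _ ≤ ∑ S ∈ powersetCard k univ, pr (bernoulliWeight p)
          (fun ω => ∀ i ∈ ({i | Disjoint (f i) S} : Finset ι), ω i = false) :=
        pr_exists_le_sum hw _ _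
    _ ≤ ∑ _S ∈ powersetCard k (univ : Finset V), exp (-(p * m)) := by
        refine sum_le_sum fun S hS => (pr_bernoulliWeight_forall_false_le hp1 _).trans ?_
        exact exp_le_exp.2 (neg_le_neg (mul_le_mul_of_nonneg_left
          (hm S (mem_powersetCard.1 hS).2) hp0))
    _ = (Fintype.card V).choose k * exp (-(p * m)) := by simp

lemma pr_not_exists_kept_matching_le (hf : Function.Injective f) {r : ℕ} (hr : 0 < r)
    (hfr : ∀ i, #(f i) = r) {p : ℝ} (hp0 : 0 ≤ p) (hp1 : p ≤ 1) {ρ : ℝ} {k : ℕ}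
    (hkV : k ≤ Fintype.card V) (hρk : r * ρ * Fintype.card V < k + 1) :
    pr (bernoulliWeight p) (fun ω => ¬∃ T : Finset ι, (∀ i ∈ T, ω i = true) ∧
        (T : Set ι).PairwiseDisjoint f ∧ ρ * Fintype.card V ≤ #T)
      ≤ (Fintype.card V).choose k *
          exp (-(p * (Fintype.card ι - k * (Fintype.card V : ℝ) ^ (r - 1)))) := by
  refine (pr_mono (bernoulliWeight_nonneg hp0 hp1) fun ω hω => ?_).trans
    (pr_exists_forall_kept_not_disjoint_le f hp0 hp1 k fun S hS => ?_)
  · have hsmall : ∀ M ⊆ ({i | ω i = true} : Finset ι), (M : Set ι).PairwiseDisjoint f →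
        r * #M ≤ k := by
      intro M hM hMdisj
      have hMρ : (#M : ℝ) < ρ * Fintype.card V :=
        not_le.1 fun h => hω ⟨M, fun i hi => by simpa using hM hi, hMdisj, h⟩
      have : (r * #M : ℝ) < k + 1 := by
        calc (r * #M : ℝ) < r * (ρ * Fintype.card V) := by gcongr
          _ = r * ρ * Fintype.card V := by ring
          _ < k + 1 := hρk
      exact_mod_cast Nat.lt_succ_iff.1 (by exact_mod_cast this)
    obtain ⟨S, hS, hhit⟩ := exists_card_eq_forall_not_disjoint f hr hfr _ hkV hsmall
    exact ⟨S, hS, fun i hi => hhit i (by simpa using hi)⟩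
  · have hsplit := card_filter_add_card_filter_not (s := (univ : Finset ι))
      (p := fun i => Disjoint (f i) S)
    have hmeet := (card_filter_not_disjoint_le_s6 f hf hfr S).trans
      (Nat.mul_le_mul (le_of_eq hS) (Nat.choose_le_pow _ _))
    rw [card_univ] at hsplit
    have : (Fintype.card ι : ℝ) ≤ #{i | Disjoint (f i) S} + k * (Fintype.card V : ℝ) ^ (r - 1) := by
      exact_mod_cast hsplit ▸ Nat.add_le_add_left hmeet _
    linarith

end RandomSubhypergraph

theorem one_sub_exp_le_pr_exists_kept_matching {ι V : Type*} [Fintype ι] [DecidableEq ι]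
    [Fintype V] [DecidableEq V] (f : ι → Finset V) (hf : Function.Injective f) {r : ℕ}
    (hr : 0 < r) (hfr : ∀ i, #(f i) = r) {α c t : ℝ} (hc : 0 ≤ c)
    (hcV : c ≤ (Fintype.card V : ℝ) ^ (r - 1)) (ht0 : 0 < t) (ht1 : t ≤ 1) (htα : t ≤ α / 2)
    (htV : 2 ≤ t * Fintype.card V) (htlog : t * (1 + log (2 / t)) ≤ c * α / 4)
    (hι : α * Fintype.card V ^ r ≤ Fintype.card ι) :
    1 - exp (-(c * α * Fintype.card V / 4)) ≤
      pr (bernoulliWeight (c / (Fintype.card V : ℝ) ^ (r - 1))) (fun ω => ∃ T : Finset ι,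
        (∀ i ∈ T, ω i = true) ∧ (T : Set ι).PairwiseDisjoint f ∧ t / r * Fintype.card V ≤ #T) := by
  set n := Fintype.card V
  have hn0 : (0 : ℝ) < n := by nlinarith
  have hkV : ⌊t * n⌋₊ ≤ n := Nat.floor_le_of_le (by nlinarith)
  have hρk : r * (t / r) * n < ⌊t * n⌋₊ + 1 := by
    rw [mul_div_cancel₀ _ (by positivity)]
    exact Nat.lt_floor_add_one _
  have hbad := pr_not_exists_kept_matching_le f hf hr hfr (by positivity)
    (div_le_one_of_le₀ hcV (by positivity)) hkV hρk
  have hnot := pr_not (sum_bernoulliWeight (c / (n : ℝ) ^ (r - 1))) fun ω => ∃ T : Finset ι,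
    (∀ i ∈ T, ω i = true) ∧ (T : Set ι).PairwiseDisjoint f ∧ t / r * n ≤ #T
  linarith [choose_floor_mul_exp_le hr hc ht0 ht1 htα htV htlog hι]

theorem random_sparse_subhypergraph_has_linear_matching_bernoulli
    (α c : ℝ) (hα : 0 < α) (hc : 0 < c) (r : ℕ) (hr : 2 ≤ r) :
    ∃ ρ : ℝ, 0 < ρ ∧ ∃ N : ℕ, ∀ n : ℕ, N ≤ n →
      ∀ 𝓗 : Finset (Finset (Fin n)),
        (∀ e ∈ 𝓗, e.card = r) →
        α * (n : ℝ) ^ r ≤ (𝓗.card : ℝ) →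
        1 - Real.exp (-(c * α ^ 2 * n) / (3 * r)) ≤
          pr
            -- each edge of ℋ is kept independently with probability p = c·n^{−r+1}:
            (fun ω : {e // e ∈ 𝓗} → Bool =>
              ∏ e : {e // e ∈ 𝓗},
                if ω e = true then c / (n : ℝ) ^ (r - 1) else 1 - c / (n : ℝ) ^ (r - 1))
            -- the kept edges contain a matching of size at least ρn:
            (fun ω =>
              ∃ T : Finset {e // e ∈ 𝓗},
                (∀ e ∈ T, ω e = true) ∧
                (↑T : Set {e // e ∈ 𝓗}).Pairwise
                  (fun e e' => Disjoint (e : Finset (Fin n)) (e' : Finset (Fin n))) ∧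
                ρ * n ≤ (T.card : ℝ)) := by
  obtain ⟨t, ht0, htδ, htlog⟩ := exists_mul_one_add_log_two_div_le (ε := c * α / 4)
    (δ := min (α / 2) 1) (by positivity) (by positivity)
  obtain ⟨htα, ht1⟩ := le_min_iff.1 htδ
  refine ⟨t / r, by positivity, ⌈max c (2 / t)⌉₊, fun n hn 𝓗 hunif hcard => ?_⟩
  have hmax : max c (2 / t) ≤ n := Nat.ceil_le.1 hn
  have htn : 2 ≤ t * n := by
    rw [mul_comm, ← div_le_iff₀ ht0]; exact (le_max_right _ _).trans hmax
  have hn1 : (1 : ℝ) ≤ n := by nlinarith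
  have hcn : c ≤ (n : ℝ) ^ (r - 1) :=
    (le_max_left _ _).trans (hmax.trans (le_self_pow₀ hn1 (by omega)))
  have hα1 : α ≤ 1 := by
    have h𝓗 : (#𝓗 : ℝ) ≤ n ^ r := by
      exact_mod_cast (card_le_pow_of_forall_card_eq hunif).trans_eq (by simp)
    nlinarith [pow_pos (by linarith : (0 : ℝ) < n) r]
  have hmain := one_sub_exp_le_pr_exists_kept_matching (Subtype.val : 𝓗 → Finset (Fin n))
    Subtype.val_injective (by omega) (fun e => hunif e e.2) hc.le (by simpa using hcn) ht0 ht1 htα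
    (by simpa using htn) htlog (by simpa using hcard)
  rw [Fintype.card_fin] at hmain
  calc 1 - exp (-(c * α ^ 2 * n) / (3 * r)) ≤ 1 - exp (-(c * α * n / 4)) := by
        have hr2 : (2 : ℝ) ≤ r := by exact_mod_cast hr
        gcongr
        rw [neg_div, neg_le_neg_iff, div_le_div_iff₀ (by positivity) (by norm_num)]
        nlinarith [mul_pos (mul_pos hc hα) (by linarith : (0 : ℝ) < n)]
    _ ≤ _ := hmain
end

section
/- For every δ ∈ (0,1] there exists k₀ such that every digraph R on k ≥ k₀ vertices with minimum out-degree at least δk/2 contains six distinct vertices x, y, z, u, w₁, w₂ such that xy, xz, w₂y, w₂z, yu, zu, yw₁, zw₁ are all edges of R (that is, R contains an oriented copy of K_{2,4} in which x and w₂ send edges to both y and z, and y and z each send edges to both u and w₁). -/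
/-!
Count the directed 2-paths `v → y → w`. With all out-degrees at least `D = δk/2` there are at
least `kD²` of them, so by Cauchy–Schwarz over the `k²` pairs `(v, w)` there are at least `D⁴`
pairs of 2-paths with the same ends. Such a pair, through `y` and `z`, is a common in-neighbour `v`
and a common out-neighbour `w` of `y` and `z`. If every pair `y ≠ z` had at most five common
in-neighbours or at most five common out-neighbours, there would be at most `6k³` of them, which
is less than `D⁴` once `δ⁴k > 96`. A pair `y ≠ z` with six common in- and four common
out-neighbours contains the oriented `K_{2,4}`.
-/

open Finset

section CommonNeighbours

variable {V : Type*} [Fintype V] (E : V → V → Prop) [DecidableRel E]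

def outNbrs (v : V) : Finset V := {w | E v w}

def pathMiddles (v w : V) : Finset V := {y | E v y ∧ E y w}

def commonInNbrs (y z : V) : Finset V := {v | E v y ∧ E v z}

def commonOutNbrs (y z : V) : Finset V := {w | E y w ∧ E z w}

theorem sum_card_pathMiddles (v : V) :
    ∑ w, #(pathMiddles E v w) = ∑ y ∈ outNbrs E v, #(outNbrs E y) := by
  simp only [pathMiddles, outNbrs, card_filter, sum_filter, ite_and]
  rw [sum_comm]
  simp [sum_ite_irrel]

theorem mul_sq_le_sum_sum_card_pathMiddles {D : ℝ} (hD : 0 ≤ D)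
    (hdeg : ∀ v, D ≤ #(outNbrs E v)) :
    Fintype.card V * D ^ 2 ≤ ∑ v, ∑ w, (#(pathMiddles E v w) : ℝ) := by
  have hv (v : V) : D ^ 2 ≤ ∑ w, (#(pathMiddles E v w) : ℝ) := by
    rw [← Nat.cast_sum, sum_card_pathMiddles, Nat.cast_sum]
    calc D ^ 2 ≤ #(outNbrs E v) * D := by rw [sq]; gcongr; exact hdeg v
      _ = ∑ y ∈ outNbrs E v, D := by rw [sum_const, nsmul_eq_mul]
      _ ≤ ∑ y ∈ outNbrs E v, (#(outNbrs E y) : ℝ) := sum_le_sum fun y _ => hdeg y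
  calc Fintype.card V * D ^ 2 = ∑ _v : V, D ^ 2 := by simp
    _ ≤ _ := sum_le_sum fun v _ => hv v

theorem sum_sum_card_pathMiddles_sq :
    ∑ v, ∑ w, #(pathMiddles E v w) ^ 2 =
      ∑ y, ∑ z, #(commonInNbrs E y z) * #(commonOutNbrs E y z) := by
  simp only [pathMiddles, commonInNbrs, commonOutNbrs, card_filter, sq, sum_mul_sum,
    ite_zero_mul_ite_zero, mul_one]
  calc _ = ∑ v, ∑ y, ∑ z, ∑ w,
        if (E v y ∧ E y w) ∧ E v z ∧ E z w then 1 else 0 := by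
          refine sum_congr rfl fun v _ => ?_
          rw [sum_comm]
          exact sum_congr rfl fun y _ => sum_comm
    _ = ∑ y, ∑ z, ∑ v, ∑ w,
        if (E v y ∧ E y w) ∧ E v z ∧ E z w then 1 else 0 := by
          rw [sum_comm]
          exact sum_congr rfl fun y _ => sum_comm
    _ = _ := by
          refine sum_congr rfl fun y _ => sum_congr rfl fun z _ => sum_congr rfl fun v _ =>
            sum_congr rfl fun w _ => ?_
          exact if_congr (by tauto) rfl rfl

theorem sum_sum_card_common_le [DecidableEq V] {t : ℕ}
    (h : ∀ y z, y ≠ z → #(commonInNbrs E y z) ≤ t ∨ #(commonOutNbrs E y z) ≤ t) :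
    ∑ y, ∑ z, #(commonInNbrs E y z) * #(commonOutNbrs E y z) ≤ (t + 1) * Fintype.card V ^ 3 := by
  set k := Fintype.card V
  have hterm (y z : V) : #(commonInNbrs E y z) * #(commonOutNbrs E y z) ≤
      (if y = z then k ^ 2 else 0) + t * k := by
    have hin : #(commonInNbrs E y z) ≤ k := card_le_univ _
    have hout : #(commonOutNbrs E y z) ≤ k := card_le_univ _
    split_ifs with hyz
    · nlinarith
    · rcases h y z hyz with h' | h'
      · nlinarith
      · nlinarith
  calc _ ≤ ∑ y : V, ∑ z : V, ((if y = z then k ^ 2 else 0) + t * k) :=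
        sum_le_sum fun y _ => sum_le_sum fun z _ => hterm y z
    _ = (t + 1) * k ^ 3 := by
      simp only [sum_add_distrib, sum_ite_eq, mem_univ, ↓reduceIte, sum_const, card_univ,
        smul_eq_mul, k]
      ring

theorem exists_ne_lt_card_commonInNbrs_lt_card_commonOutNbrs [DecidableEq V] [Nonempty V]
    {D : ℝ} (hD : 0 ≤ D) (hdeg : ∀ v, D ≤ #(outNbrs E v)) {t : ℕ}
    (hk : (t + 1) * (Fintype.card V : ℝ) ^ 3 < D ^ 4) :
    ∃ y z, y ≠ z ∧ t < #(commonInNbrs E y z) ∧ t < #(commonOutNbrs E y z) := by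
  by_contra! hno
  have hk0 : (0 : ℝ) < Fintype.card V := by positivity
  have hlower := mul_sq_le_sum_sum_card_pathMiddles E hD hdeg
  have hcs := sq_sum_le_card_mul_sum_sq (s := (univ : Finset (V × V)))
    (f := fun p => (#(pathMiddles E p.1 p.2) : ℝ))
  rw [card_univ, Fintype.card_prod, Fintype.sum_prod_type, Fintype.sum_prod_type,
    Nat.cast_mul, ← sq] at hcs
  have hupper : ∑ v, ∑ w, (#(pathMiddles E v w) : ℝ) ^ 2 ≤ (t + 1) * Fintype.card V ^ 3 := by
    exact_mod_cast (sum_sum_card_pathMiddles_sq E).trans_le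
      (sum_sum_card_common_le E fun y z hyz => (le_or_gt _ t).imp_right (hno y z hyz))
  have : (Fintype.card V : ℝ) ^ 2 * D ^ 4 ≤ Fintype.card V ^ 2 * ((t + 1) * Fintype.card V ^ 3) :=
    calc (Fintype.card V : ℝ) ^ 2 * D ^ 4 = (Fintype.card V * D ^ 2) ^ 2 := by ring
      _ ≤ (∑ v, ∑ w, (#(pathMiddles E v w) : ℝ)) ^ 2 := by gcongr
      _ ≤ _ := hcs.trans (by gcongr)
  exact (le_of_mul_le_mul_left this (by positivity)).not_gt hk

theorem exists_two_mem_sdiff {α : Type*} [DecidableEq α] {s t : Finset α} (h : #t + 2 ≤ #s) :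
    ∃ a ∈ s, a ∉ t ∧ ∃ b ∈ s, b ∉ t ∧ a ≠ b := by
  obtain ⟨a, ha, b, hb, hab⟩ := one_lt_card.1 (by have := le_card_sdiff t s; omega : 1 < #(s \ t))
  rw [mem_sdiff] at ha hb
  exact ⟨a, ha.1, ha.2, b, hb.1, hb.2, hab⟩

theorem exists_oriented_K24 [DecidableEq V] {y z : V} (hyz : y ≠ z)
    (hin : 6 ≤ #(commonInNbrs E y z)) (hout : 4 ≤ #(commonOutNbrs E y z)) :
    ∃ x y z u w₁ w₂ : V, ({x, y, z, u, w₁, w₂} : Finset V).card = 6 ∧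
      E x y ∧ E x z ∧ E w₂ y ∧ E w₂ z ∧ E y u ∧ E z u ∧ E y w₁ ∧ E z w₁ := by
  obtain ⟨u, hu, huyz, w₁, hw₁, hw₁yz, huw₁⟩ := exists_two_mem_sdiff
    (s := commonOutNbrs E y z) (t := {y, z}) (by have := card_le_two (a := y) (b := z); omega)
  obtain ⟨x, hx, hxyzuw, w₂, hw₂, hw₂yzuw, hxw₂⟩ := exists_two_mem_sdiff
    (s := commonInNbrs E y z) (t := {y, z, u, w₁})
    (by have := card_le_four (a := y) (b := z) (c := u) (d := w₁); omega)
  simp only [commonInNbrs, commonOutNbrs, mem_filter, mem_univ, true_and, mem_insert,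
    mem_singleton, not_or] at hu hw₁ hx hw₂ huyz hw₁yz hxyzuw hw₂yzuw
  refine ⟨x, y, z, u, w₁, w₂, ?_, hx.1, hx.2, hw₂.1, hw₂.2, hu.1, hu.2, hw₁.1, hw₁.2⟩
  simp [card_insert_of_notMem, *, Ne.symm]

end CommonNeighbours

theorem oriented_K24_in_dense_digraph (δ : ℝ) (hδ : δ ∈ Set.Ioc (0:ℝ) 1) :
    ∃ k₀ : ℕ, ∀ (V : Type) [Fintype V] [DecidableEq V] (E : V → V → Prop),
      k₀ ≤ Fintype.card V →
      (∀ v : V, δ * (Fintype.card V : ℝ) / 2 ≤ ({w : V | E v w}.ncard : ℝ)) →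
      ∃ x y z u w₁ w₂ : V,
        ({x, y, z, u, w₁, w₂} : Finset V).card = 6 ∧
        E x y ∧ E x z ∧ E w₂ y ∧ E w₂ z ∧
        E y u ∧ E z u ∧ E y w₁ ∧ E z w₁ := by
  classical
  obtain ⟨hδ0, -⟩ := hδ
  refine ⟨⌈96 / δ ^ 4⌉₊ + 1, fun V _ _ E hk hdeg => ?_⟩
  have : Nonempty V := Fintype.card_pos_iff.1 (by omega)
  have hk96 : 96 < δ ^ 4 * Fintype.card V := by
    have hceil : 96 / δ ^ 4 < Fintype.card V :=
      (Nat.le_ceil _).trans_lt (mod_cast Nat.lt_of_succ_le hk)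
    rwa [div_lt_iff₀' (by positivity)] at hceil
  have hdeg' (v : V) : δ * Fintype.card V / 2 ≤ #(outNbrs E v) := by
    simpa [outNbrs, Set.ncard_eq_toFinset_card'] using hdeg v
  have hk0 : (0 : ℝ) < Fintype.card V := by positivity
  obtain ⟨y, z, hyz, hin, hout⟩ := exists_ne_lt_card_commonInNbrs_lt_card_commonOutNbrs E
    (by positivity) hdeg' (t := 5) (by push_cast; nlinarith [pow_pos hk0 3])
  exact exists_oriented_K24 E hyz hin (by omega)
end

section
/- Let δ ∈ (0,1] and let R be a digraph on k vertices with minimum out-degree at least δk/2. Then every set U of at least 4/δ vertices of R contains two distinct vertices u₁, u₂ such that |N⁺(u₁) ∩ N⁺(u₂)| ≥ δ²k/10, where N⁺(v) denotes the out-neighbourhood of v. -/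
/-!
Pick `S ⊆ U` with `m = ⌈4/δ⌉₊` vertices. By the second Bonferroni inequality,
`∑_{v ∈ S} |N⁺(v)| - ∑_{u ≠ v} |N⁺(u) ∩ N⁺(v)| / 2 ≤ |⋃_{v ∈ S} N⁺(v)| ≤ k`, so the ordered pairs of
`S` share at least `m δ k - 2k` common out-neighbours in total and one of the `m(m-1)` pairs shares
at least `(mδ - 2) k / (m(m-1))`. Since `x = mδ ∈ [4, 5]`, this is at least
`x² k / (10 m(m-1)) ≥ δ² k / 10`, because `(x - 4)(x - 5) ≤ 0` gives `x² / 10 ≤ x - 2`.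
-/

open Finset

namespace Finset

variable {ι α : Type*} [DecidableEq α]

lemma sum_card_eq_sum_card_filter_mem (S : Finset ι) (f : ι → Finset α) :
    ∑ i ∈ S, #(f i) = ∑ a ∈ S.biUnion f, #{i ∈ S | a ∈ f i} := by
  refine Eq.trans (sum_congr rfl fun i hi => ?_)
    (sum_card_bipartiteAbove_eq_sum_card_bipartiteBelow (r := fun i a => a ∈ f i))
  rw [bipartiteAbove, filter_mem_eq_inter, inter_eq_right.2 (subset_biUnion_of_mem f hi)]

lemma sum_offDiag_card_inter_eq (S : Finset ι) (f : ι → Finset α) :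
    ∑ p ∈ S.offDiag, #(f p.1 ∩ f p.2) =
      ∑ a ∈ S.biUnion f, #{i ∈ S | a ∈ f i}.offDiag := by
  refine Eq.trans (sum_congr rfl fun p hp => ?_)
    ((sum_card_bipartiteAbove_eq_sum_card_bipartiteBelow
      (r := fun p a => a ∈ f p.1 ∩ f p.2)).trans (sum_congr rfl fun a _ => ?_))
  · have hp := subset_biUnion_of_mem f (mem_offDiag.1 hp).1
    rw [bipartiteAbove, filter_mem_eq_inter, inter_eq_right.2 (inter_subset_left.trans hp)]
  · congr 1
    ext ⟨i, j⟩
    simp only [bipartiteBelow, mem_filter, mem_offDiag, mem_inter]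
    tauto

lemma two_mul_sum_card_le (S : Finset ι) (f : ι → Finset α) :
    2 * ∑ i ∈ S, #(f i) ≤ 2 * #(S.biUnion f) + ∑ p ∈ S.offDiag, #(f p.1 ∩ f p.2) := by
  rw [sum_card_eq_sum_card_filter_mem, sum_offDiag_card_inter_eq, mul_sum, card_eq_sum_ones,
    mul_sum, ← sum_add_distrib]
  refine sum_le_sum fun a _ => ?_
  rw [offDiag_card]
  generalize #{i ∈ S | a ∈ f i} = d
  -- `2d ≤ 2 + d(d - 1)` is `(d - 1)(d - 2) ≥ 0`
  rcases Nat.lt_or_ge d 2 with hd | hd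
  · interval_cases d <;> simp
  · have := Nat.sub_add_cancel (Nat.le_mul_self d)
    nlinarith

lemma exists_ne_two_mul_sub_le_mul_card_inter (S : Finset ι) (f : ι → Finset α) {d n : ℝ}
    (hS : 2 ≤ #S) (hd : ∀ i ∈ S, d ≤ #(f i)) (hn : #(S.biUnion f) ≤ n) :
    ∃ i ∈ S, ∃ j ∈ S, i ≠ j ∧ 2 * (#S * d - n) ≤ #S * (#S - 1) * #(f i ∩ f j) := by
  have hpairs : S.offDiag.Nonempty := by
    obtain ⟨a, ha, b, hb, hab⟩ := one_lt_card.1 hS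
    exact ⟨(a, b), mem_offDiag.2 ⟨ha, hb, hab⟩⟩
  obtain ⟨⟨i, j⟩, hij, hmax⟩ := S.offDiag.exists_max_image (fun p => #(f p.1 ∩ f p.2)) hpairs
  obtain ⟨hi, hj, hne⟩ := mem_offDiag.1 hij
  refine ⟨i, hi, j, hj, hne, ?_⟩
  have hsum : #S * d ≤ ∑ i ∈ S, (#(f i) : ℝ) := by
    simpa using S.card_nsmul_le_sum _ d hd
  have hbonferroni : 2 * ∑ i ∈ S, (#(f i) : ℝ) ≤
      2 * #(S.biUnion f) + ∑ p ∈ S.offDiag, (#(f p.1 ∩ f p.2) : ℝ) := by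
    exact_mod_cast two_mul_sum_card_le S f
  have hmax : ∑ p ∈ S.offDiag, (#(f p.1 ∩ f p.2) : ℝ) ≤ #S * (#S - 1) * #(f i ∩ f j) := by
    have := S.offDiag.sum_le_card_nsmul (fun p => (#(f p.1 ∩ f p.2) : ℝ)) _
      fun p hp => Nat.cast_le.2 (hmax p hp)
    rw [nsmul_eq_mul, offDiag_card, Nat.cast_sub (Nat.le_mul_self _)] at this
    push_cast at this
    linarith
  linarith

end Finset

lemma mul_mul_sub_one_mul_sq_div_ten_le {δ k m : ℝ} (hδ : δ ≤ 1) (hk : 0 ≤ k)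
    (h4 : 4 ≤ m * δ) (h5 : m * δ ≤ 4 + δ) :
    m * (m - 1) * (δ ^ 2 * k / 10) ≤ 2 * (m * (δ * k / 2) - k) := by
  have hδ0 : 0 ≤ δ := by nlinarith
  have : (m * δ - 4) * (m * δ - 5) ≤ 0 := by nlinarith
  nlinarith [mul_nonneg hk (mul_nonneg (by linarith : (0 : ℝ) ≤ m * δ) hδ0)]

theorem two_vertices_with_large_common_outneighbourhood
    (δ : ℝ) (hδ : δ ∈ Set.Ioc (0:ℝ) 1)
    {V : Type*} [Fintype V] (E : V → V → Prop) (k : ℕ)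
    (hk : Fintype.card V = k)
    (hdeg : ∀ v : V, δ * k / 2 ≤ ({w : V | E v w}.ncard : ℝ))
    (U : Finset V) (hU : 4 / δ ≤ (U.card : ℝ)) :
    ∃ u₁ ∈ U, ∃ u₂ ∈ U, u₁ ≠ u₂ ∧
      δ ^ 2 * k / 10 ≤ ({w : V | E u₁ w ∧ E u₂ w}.ncard : ℝ) := by
  classical
  obtain ⟨hδ0, hδ1⟩ := hδ
  obtain ⟨S, hSU, hS⟩ := exists_subset_card_eq (Nat.ceil_le.2 hU)
  set m := ⌈4 / δ⌉₊
  have hm4 : 4 ≤ m * δ := (div_le_iff₀ hδ0).1 (Nat.le_ceil _)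
  have hm5 : m * δ ≤ 4 + δ := by
    have := mul_le_mul_of_nonneg_right (Nat.ceil_lt_add_one (by positivity : 0 ≤ 4 / δ)).le hδ0.le
    rwa [add_mul, div_mul_cancel₀ _ hδ0.ne', one_mul] at this
  have hm : (4 : ℝ) ≤ m := by nlinarith
  obtain ⟨u₁, h₁, u₂, h₂, hne, hpair⟩ := S.exists_ne_two_mul_sub_le_mul_card_inter
    (fun v => {w | E v w}.toFinset) (d := δ * k / 2) (n := k)
    (by rw [hS]; exact_mod_cast (by linarith : (2 : ℝ) ≤ m))
    (fun v _ => by simpa [Set.ncard_eq_toFinset_card'] using hdeg v)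
    (by rw [← hk]; exact_mod_cast card_le_univ _)
  refine ⟨u₁, hSU h₁, u₂, hSU h₂, hne, ?_⟩
  rw [hS, ← Set.toFinset_inter, ← Set.ncard_eq_toFinset_card'] at hpair
  exact le_of_mul_le_mul_left
    ((mul_mul_sub_one_mul_sq_div_ten_le hδ1 k.cast_nonneg hm4 hm5).trans hpair) (by nlinarith)
end

section
/- Let β ∈ (0,1] and let H be a bipartite graph with both parts of size n and at least βn² edges. Then H contains at least βn/2 pairwise edge-disjoint matchings, each of size at least βn/2. -/
/-!
Index the cells of the `n × n` grid by `Fin n` on both sides and split `H` into its `n`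
cyclic diagonals `{(i, j) ∈ H | j - i = d}`. Each diagonal meets every row and every column at
most once, so it is a matching with at most `n` edges, and distinct diagonals are disjoint.
Since the diagonals of size `< βn/2` carry fewer than `βn²/2` edges in total, the remaining
`≥ βn²/2` edges lie on diagonals of size at most `n`, so at least `βn/2` diagonals have size
`≥ βn/2`.
-/

open Finset

theorem Finset.sum_le_card_filter_mul_add_card_mul {ι : Type*} (s : Finset ι) (f : ι → ℝ)
    {m t : ℝ} (hfm : ∀ i ∈ s, f i ≤ m) (ht : 0 ≤ t) :
    ∑ i ∈ s, f i ≤ #{i ∈ s | t ≤ f i} * m + #s * t := by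
  classical
  rw [← sum_filter_add_sum_filter_not s (fun i => t ≤ f i)]
  gcongr
  · simpa using sum_le_card_nsmul _ _ m fun i hi => hfm i (mem_filter.1 hi).1
  · calc ∑ i ∈ s with ¬t ≤ f i, f i
        ≤ #{i ∈ s | ¬t ≤ f i} * t := by
          simpa using sum_le_card_nsmul _ _ t fun i hi => (not_le.1 (mem_filter.1 hi).2).le
      _ ≤ #s * t := by gcongr; exact filter_subset _ _

section CyclicDiagonal

variable {G : Type*} [AddGroup G] [DecidableEq G]

def cyclicDiagonal (H : Finset (G × G)) (d : G) : Finset (G × G) :=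
  {e ∈ H | e.2 - e.1 = d}

variable {H : Finset (G × G)} {d : G}

theorem sub_eq_of_mem_cyclicDiagonal {e : G × G} (he : e ∈ cyclicDiagonal H d) :
    e.2 - e.1 = d :=
  (mem_filter.1 he).2

theorem cyclicDiagonal_subset : cyclicDiagonal H d ⊆ H :=
  filter_subset _ _

theorem fst_ne_and_snd_ne_of_mem_cyclicDiagonal {e e' : G × G} (he : e ∈ cyclicDiagonal H d)
    (he' : e' ∈ cyclicDiagonal H d) (hne : e ≠ e') : e.1 ≠ e'.1 ∧ e.2 ≠ e'.2 := by
  have hsub := (sub_eq_of_mem_cyclicDiagonal he).trans (sub_eq_of_mem_cyclicDiagonal he').symm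
  refine ⟨fun h1 => hne (Prod.ext h1 ?_), fun h2 => hne (Prod.ext ?_ h2)⟩
  · rwa [h1, sub_left_inj] at hsub
  · rwa [h2, sub_right_inj] at hsub

theorem card_cyclicDiagonal_le [Fintype G] : #(cyclicDiagonal H d) ≤ Fintype.card G :=
  calc #(cyclicDiagonal H d) = #((cyclicDiagonal H d).image Prod.fst) :=
        (card_image_of_injOn fun _ he _ he' h =>
          not_imp_not.1 (fun hne => (fst_ne_and_snd_ne_of_mem_cyclicDiagonal he he' hne).1) h).symm
    _ ≤ Fintype.card G := card_le_univ _

theorem disjoint_cyclicDiagonal {d d' : G} (h : d ≠ d') :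
    Disjoint (cyclicDiagonal H d) (cyclicDiagonal H d') :=
  disjoint_left.2 fun _ he he' =>
    h ((sub_eq_of_mem_cyclicDiagonal he).symm.trans (sub_eq_of_mem_cyclicDiagonal he'))

theorem sum_card_cyclicDiagonal [Fintype G] : ∑ d, #(cyclicDiagonal H d) = #H :=
  (card_eq_sum_card_fiberwise fun _ _ => mem_univ _).symm

theorem injOn_cyclicDiagonal : {d | (cyclicDiagonal H d).Nonempty}.InjOn (cyclicDiagonal H) :=
  fun _ ⟨_, he⟩ _ _ h =>
    (sub_eq_of_mem_cyclicDiagonal he).symm.trans (sub_eq_of_mem_cyclicDiagonal (h ▸ he))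

end CyclicDiagonal

theorem many_large_edge_disjoint_matchings
    (β : ℝ) (hβ : β ∈ Set.Ioc (0:ℝ) 1) (n : ℕ)
    (H : Finset (Fin n × Fin n)) (hcard : β * (n : ℝ) ^ 2 ≤ (H.card : ℝ)) :
    ∃ 𝓜 : Finset (Finset (Fin n × Fin n)),
      β * n / 2 ≤ (𝓜.card : ℝ) ∧
      -- the matchings are pairwise edge-disjoint:
      (↑𝓜 : Set (Finset (Fin n × Fin n))).Pairwise (fun M M' => Disjoint M M') ∧
      -- each member is a matching in H of size at least βn/2:
      ∀ M ∈ 𝓜, M ⊆ H ∧ β * n / 2 ≤ (M.card : ℝ) ∧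
        (↑M : Set (Fin n × Fin n)).Pairwise
          (fun e e' => e.1 ≠ e'.1 ∧ e.2 ≠ e'.2) := by
  rcases n.eq_zero_or_pos with rfl | hn
  · exact ⟨∅, by simp, by simp, by simp⟩
  have : NeZero n := ⟨hn.ne'⟩
  have ht : 0 < β * n / 2 := by have := hβ.1; positivity
  set S : Finset (Fin n) := {d | β * n / 2 ≤ #(cyclicDiagonal H d)}
  have hS : β * n / 2 ≤ #S := by
    have hsum := sum_le_card_filter_mul_add_card_mul univ (fun d => (#(cyclicDiagonal H d) : ℝ))
      (m := n) (fun d _ => by exact_mod_cast card_cyclicDiagonal_le.trans_eq (Fintype.card_fin n))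
      ht.le
    rw [← Nat.cast_sum, sum_card_cyclicDiagonal, card_univ, Fintype.card_fin] at hsum
    have hn' : (0 : ℝ) < n := by exact_mod_cast hn
    refine le_of_mul_le_mul_right ?_ hn'
    linarith
  refine ⟨S.image (cyclicDiagonal H), ?_, ?_, ?_⟩
  · rwa [card_image_of_injOn fun d hd d' hd' => injOn_cyclicDiagonal
      (card_pos.1 (by exact_mod_cast ht.trans_le (mem_filter.1 hd).2))
      (card_pos.1 (by exact_mod_cast ht.trans_le (mem_filter.1 hd').2))]
  · simp only [coe_image]
    rintro _ ⟨d, -, rfl⟩ _ ⟨d', -, rfl⟩ hne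
    exact disjoint_cyclicDiagonal (mt (congrArg _) hne)
  · simp only [mem_image]
    rintro _ ⟨d, hd, rfl⟩
    exact ⟨cyclicDiagonal_subset, (mem_filter.1 hd).2,
      fun _ he _ he' => fst_ne_and_snd_ne_of_mem_cyclicDiagonal he he'⟩
end
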